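/- arXiv:2603.17956 — 4 statements merged into one kernel-verified Lean document; each statement's English description precedes it below -/
import Mathlib

section
/- No deterministic classical strategy wins the GHZ–Mermin game: there do not exist functions a, b, c : {0,1} → {0,1} such that for all x, y, z ∈ {0,1} with x ⊕ y ⊕ z = 0, a(x) ⊕ b(y) ⊕ c(z) = x ∨ y ∨ z. -/
/-!
Parity argument: each of the six values `a 0, a 1, b 0, b 1, c 0, c 1` enters exactly two of the
four promise inputs `000, 011, 101, 110`, so the xor of the players' answers over these inputs is
`0`, whereas the xor of the targets `x ∨ y ∨ z` over them is `0 ⊕ 1 ⊕ 1 ⊕ 1 = 1`.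
-/

theorem xor_strategy_outputs_over_promise_eq_false (a b c : Bool → Bool) :
    xor (xor (xor (a false) (xor (b false) (c false))) (xor (a false) (xor (b true) (c true))))
      (xor (xor (a true) (xor (b false) (c true))) (xor (a true) (xor (b true) (c false)))) =
      false := by
  simp [Bool.xor_left_comm, Bool.xor_comm]

theorem no_classical_strategy_wins_GHZ_Mermin :
    ¬ ∃ a b c : Bool → Bool, ∀ x y z : Bool, xor x (xor y z) = false →
      xor (a x) (xor (b y) (c z)) = (x || y || z) := by
  rintro ⟨a, b, c, h⟩
  have parity := xor_strategy_outputs_over_promise_eq_false a b c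
  rw [h false false false rfl, h false true true rfl, h true false true rfl,
    h true true false rfl] at parity
  exact Bool.noConfusion parity
end

section
/- Any deterministic classical strategy for the majority game fails on at least two of the eight possible inputs; equivalently, for any functions a, b, c : {0,1} → {0,1}, the number of triples (x,y,z) ∈ {0,1}³ with a(x) ⊕ b(y) ⊕ c(z) = Maj(x,y,z) is at most 6. -/
/-!
On the four inputs of a fixed parity every value `a x`, `b y`, `c z` occurs exactly twice, so
the outputs `a x ⊕ b y ⊕ c z` XOR to `0` there; but `Maj` takes the values `0, 1, 1, 1` on the
even-weight inputs and `0, 0, 0, 1` on the odd-weight ones, which XOR to `1`. So every strategy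
loses on an input of each parity, hence on at least two inputs.
-/

/-- Majority of three bits: `true` iff at least two of the inputs are `true`. -/
def Maj (x y z : Bool) : Bool := decide (2 ≤ x.toNat + y.toNat + z.toNat)

theorem exists_loss_of_parity (a b c : Bool → Bool) (p : Bool) :
    ∃ t : Bool × Bool × Bool, (t.1 ^^ t.2.1 ^^ t.2.2) = p ∧
      xor (a t.1) (xor (b t.2.1) (c t.2.2)) ≠ Maj t.1 t.2.1 t.2.2 := by
  by_contra! hwin
  cases p
  · have h := congrArg₂ xor
      (congrArg₂ xor (hwin (false, false, false) rfl) (hwin (false, true, true) rfl))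
      (congrArg₂ xor (hwin (true, false, true) rfl) (hwin (true, true, false) rfl))
    simp [Maj, Bool.xor_left_comm, Bool.xor_comm] at h
  · have h := congrArg₂ xor
      (congrArg₂ xor (hwin (true, false, false) rfl) (hwin (false, true, false) rfl))
      (congrArg₂ xor (hwin (false, false, true) rfl) (hwin (true, true, true) rfl))
    simp [Maj, Bool.xor_left_comm, Bool.xor_comm] at h

theorem classical_majority_wins_at_most_six (a b c : Bool → Bool) :
    (Finset.univ.filter (fun t : Bool × Bool × Bool =>
      xor (a t.1) (xor (b t.2.1) (c t.2.2)) = Maj t.1 t.2.1 t.2.2)).card ≤ 6 := by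
  obtain ⟨s, hs_even, hs_loss⟩ := exists_loss_of_parity a b c false
  obtain ⟨t, ht_odd, ht_loss⟩ := exists_loss_of_parity a b c true
  have hst : s ≠ t := by
    rintro rfl
    simp [hs_even] at ht_odd
  have hwins : Finset.univ.filter (fun t : Bool × Bool × Bool =>
      xor (a t.1) (xor (b t.2.1) (c t.2.2)) = Maj t.1 t.2.1 t.2.2) ⊆ Finset.univ \ {s, t} := by
    intro u hu
    simp only [Finset.mem_filter, Finset.mem_univ, true_and] at hu
    simp only [Finset.mem_sdiff, Finset.mem_univ, Finset.mem_insert, Finset.mem_singleton, true_and]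
    rintro (rfl | rfl)
    exacts [hs_loss hu, ht_loss hu]
  calc _ ≤ (Finset.univ \ {s, t}).card := Finset.card_le_card hwins
    _ = 6 := by rw [Finset.card_sdiff_of_subset (Finset.subset_univ _), Finset.card_pair hst]; rfl
end

section
/- The magic pentagram is unfillable: if H₁,…,H₅ are five 4-element subsets of a 10-element vertex set such that each vertex lies in exactly two of them, and an odd number of the sets are designated 'odd', then there is no assignment f of bits to vertices such that the sum of f over each hyperedge Hᵢ has the designated parity (0 for 'even' edges, 1 for 'odd' edges). -/
/-!
Adding up the five parity constraints, every vertex is counted twice on the left, so the left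
side vanishes in `ZMod 2`, while the right side is the number of odd hyperedges, which is odd.
-/

open Finset

theorem Finset.sum_sum_mem_eq_sum_card_filter_nsmul {ι V M : Type*} [Fintype ι] [Fintype V]
    [DecidableEq V] [AddCommMonoid M] (H : ι → Finset V) (f : V → M) :
    ∑ i, ∑ v ∈ H i, f v = ∑ v, #{i | v ∈ H i} • f v := by
  rw [sum_comm' (t' := univ) (s' := fun v => {i | v ∈ H i}) (by simp)]
  simp only [sum_const]

theorem Finset.sum_sum_mem_eq_zero_of_even_card {ι V R : Type*} [Fintype ι] [Fintype V]
    [DecidableEq V] [Ring R] [CharP R 2] (H : ι → Finset V) (f : V → R)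
    (heven : ∀ v, Even #{i | v ∈ H i}) :
    ∑ i, ∑ v ∈ H i, f v = 0 := by
  rw [sum_sum_mem_eq_sum_card_filter_nsmul]
  refine sum_eq_zero fun v _ => ?_
  rw [nsmul_eq_mul, (CharP.cast_eq_zero_iff R 2 _).mpr (even_iff_two_dvd.mp (heven v)), zero_mul]

theorem ZMod.sum_eq_card_filter_eq_one {ι : Type*} [Fintype ι] (p : ι → ZMod 2) :
    ∑ i, p i = #{i | p i = 1} := by
  rw [← sum_boole]
  refine sum_congr rfl fun i _ => ?_
  generalize p i = x
  fin_cases x <;> rfl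

theorem magic_pentagram_unfillable_general
    (H : Fin 5 → Finset (Fin 10))
    (hdeg : ∀ v : Fin 10, (Finset.univ.filter (fun i => v ∈ H i)).card = 2)
    (p : Fin 5 → ZMod 2)
    (hodd : Odd (Finset.univ.filter (fun i => p i = 1)).card) :
    ¬ ∃ f : Fin 10 → ZMod 2, ∀ i, (∑ v ∈ H i, f v) = p i := by
  rintro ⟨f, hf⟩
  have hlhs : ∑ i, ∑ v ∈ H i, f v = 0 :=
    sum_sum_mem_eq_zero_of_even_card H f fun v => hdeg v ▸ even_two
  have hrhs : ∑ i, p i = 1 := by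
    rw [ZMod.sum_eq_card_filter_eq_one, ZMod.natCast_eq_one_iff_odd]
    exact hodd
  simp only [hf] at hlhs
  exact zero_ne_one (hlhs.symm.trans hrhs)

theorem magic_pentagram_unfillable
    (H : Fin 5 → Finset (Fin 10))
    (hcard : ∀ i, (H i).card = 4)
    (hdeg : ∀ v : Fin 10, (Finset.univ.filter (fun i => v ∈ H i)).card = 2)
    (p : Fin 5 → ZMod 2)
    (hodd : Odd (Finset.univ.filter (fun i => p i = 1)).card) :
    ¬ ∃ f : Fin 10 → ZMod 2, ∀ i, (∑ v ∈ H i, f v) = p i :=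
  magic_pentagram_unfillable_general H hdeg p hodd
end

section
/- Any nonsignalling strategy for a game with binary inputs in which each player is deterministic on input 1 can be exactly simulated classically: define shared randomness Λ distributed as the joint output distribution on all-zero inputs, and let player i output λ_i on input 0 and â_i on input 1; then for every input x the resulting output distribution equals that of the original nonsignalling strategy. -/
/-! Fix the inputs `x` and let `S` be the players with input `0`. The simulation outputs `a` exactly
when `a` equals `â` off `S` and `λ` agrees with `a` on `S`. Since `λ ~ P(· | 0)`, nonsignalling turns
the probability of the latter into the marginal of `P(· | x)` on `S` at `a`. Under `x` the players
outside `S` output `â` with probability one, so that marginal is `P(a | x)`; and if `a` differs from `â`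
off `S`, both sides vanish. -/

open Finset

lemma eq_of_ne_zero_of_sum_fiber_eq_ite {α β : Type*} [Fintype α] [DecidableEq β]
    {p : α → ℝ} (hp : ∀ a, 0 ≤ p a) {f : α → β} {c : β}
    (hf : ∀ b, ∑ a ∈ univ.filter (fun a => f a = b), p a = if b = c then 1 else 0)
    {a : α} (ha : p a ≠ 0) : f a = c := by
  by_contra hne
  have hfiber := hf (f a)
  rw [if_neg hne, sum_eq_zero_iff_of_nonneg (fun a _ => hp a)] at hfiber
  exact ha (hfiber a (by simp))

lemma sum_filter_eqOn_eq_apply {ι : Type*} [Fintype ι] [DecidableEq ι] {A : ι → Type*}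
    [∀ i, Fintype (A i)] [∀ i, DecidableEq (A i)] {p : (∀ i, A i) → ℝ} {S : Finset ι}
    {c a : ∀ i, A i} (hsupp : ∀ l, p l ≠ 0 → ∀ i ∉ S, l i = c i) (ha : ∀ i ∉ S, a i = c i) :
    ∑ l ∈ univ.filter (fun l : ∀ i, A i => ∀ i ∈ S, l i = a i), p l = p a := by
  refine sum_eq_single_of_mem a (by simp) fun l hl hla => ?_
  by_contra hl0
  refine hla (funext fun i => ?_)
  by_cases hi : i ∈ S
  · exact (mem_filter.1 hl).2 i hi
  · rw [hsupp l hl0 i hi, ha i hi]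

lemma forall_ite_eq_iff {ι : Type*} [Fintype ι] {A : ι → Type*}
    (x : ι → Bool) (c l a : ∀ i, A i) :
    (∀ i, (if x i = true then c i else l i) = a i) ↔
      (∀ i, x i = true → c i = a i) ∧ ∀ i ∈ univ.filter (fun i => x i = false), l i = a i := by
  simp only [mem_filter, mem_univ, true_and, ← forall_and]
  refine forall_congr' fun i => ?_
  cases x i <;> simp

theorem nonsignalling_deterministic_classical_simulation_general
    {ι : Type} [Fintype ι] [DecidableEq ι]
    {A : ι → Type} [∀ i, Fintype (A i)] [∀ i, DecidableEq (A i)]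
    (P : (∀ i, A i) → (ι → Bool) → ℝ)
    (hpos : ∀ a x, 0 ≤ P a x)
    (hns : ∀ (S : Finset ι) (x x' : ι → Bool), (∀ i ∈ S, x i = x' i) →
      ∀ g : ∀ i, A i,
        (∑ a ∈ univ.filter (fun a : ∀ i, A i => ∀ i ∈ S, a i = g i), P a x) =
        (∑ a ∈ univ.filter (fun a : ∀ i, A i => ∀ i ∈ S, a i = g i), P a x'))
    (ahat : ∀ i, A i)
    (hdet : ∀ (i : ι) (x : ι → Bool), x i = true → ∀ b : A i,
      (∑ a ∈ univ.filter (fun a : ∀ i, A i => a i = b), P a x) =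
        if b = ahat i then 1 else 0) :
    ∀ (x : ι → Bool) (a : ∀ i, A i),
      (∑ l ∈ univ.filter
          (fun l : ∀ i, A i => ∀ i, (if x i = true then ahat i else l i) = a i),
        P l (fun _ => false)) = P a x := by
  intro x a
  set S := univ.filter (fun i => x i = false)
  have hsupp : ∀ l, P l x ≠ 0 → ∀ i ∉ S, l i = ahat i := fun l hl i hi =>
    eq_of_ne_zero_of_sum_fiber_eq_ite (hpos · x) (hdet i x (by simpa [S] using hi)) hl
  simp only [forall_ite_eq_iff]
  by_cases ha : ∀ i, x i = true → ahat i = a i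
  · simp only [eq_true ha, true_and]
    rw [hns S _ x (by simp [S]) a]
    exact sum_filter_eqOn_eq_apply hsupp fun i hi => (ha i (by simpa [S] using hi)).symm
  · have hPa : P a x = 0 := by
      by_contra hPa
      exact ha fun i hi => (hsupp a hPa i (by simp [S, hi])).symm
    simp [ha, hPa]

theorem nonsignalling_deterministic_classical_simulation
    {ι : Type} [Fintype ι] [DecidableEq ι]
    {A : ι → Type} [∀ i, Fintype (A i)] [∀ i, DecidableEq (A i)]
    (P : (∀ i, A i) → (ι → Bool) → ℝ)
    (hpos : ∀ a x, 0 ≤ P a x)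
    (hnorm : ∀ x, (∑ a : ∀ i, A i, P a x) = 1)
    (hns : ∀ (S : Finset ι) (x x' : ι → Bool), (∀ i ∈ S, x i = x' i) →
      ∀ g : ∀ i, A i,
        (∑ a ∈ univ.filter (fun a : ∀ i, A i => ∀ i ∈ S, a i = g i), P a x) =
        (∑ a ∈ univ.filter (fun a : ∀ i, A i => ∀ i ∈ S, a i = g i), P a x'))
    (ahat : ∀ i, A i)
    (hdet : ∀ (i : ι) (x : ι → Bool), x i = true → ∀ b : A i,
      (∑ a ∈ univ.filter (fun a : ∀ i, A i => a i = b), P a x) =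
        if b = ahat i then 1 else 0) :
    ∀ (x : ι → Bool) (a : ∀ i, A i),
      (∑ l ∈ univ.filter
          (fun l : ∀ i, A i => ∀ i, (if x i = true then ahat i else l i) = a i),
        P l (fun _ => false)) = P a x :=
  nonsignalling_deterministic_classical_simulation_general P hpos hns ahat hdet
end
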